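/- arXiv:2002.07690 — 3 statements merged into one kernel-verified Lean document; each statement's English description precedes it below -/
import Mathlib

section
/- The subgroup W₀, defined as the ℤ-span inside R × R of all elements c₁(n,k) with 0 < k ≤ n and all elements c₂(n,k,j) with 0 ≤ n < k and 0 < j ≤ k, is closed under the left action of M on R × R; that is, W₀ is a left ℤM-submodule of R × R. -/
/-- The formal inverse of a word over `{x, y}` (with `x = true`, `y = false`):
reverse the word and interchange the two letters. -/
def winv (w : FreeMonoid Bool) : FreeMonoid Bool :=
  FreeMonoid.ofList ((FreeMonoid.toList w).reverse.map Bool.not)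

/-- The defining relations of the free monogenic inverse monoid. -/
inductive FIMRel1 : FreeMonoid Bool → FreeMonoid Bool → Prop
  | idem (w : FreeMonoid Bool) : FIMRel1 (w * winv w * w) w
  | comm (w z : FreeMonoid Bool) :
      FIMRel1 (w * winv w * (z * winv z)) (z * winv z * (w * winv w))

/-- The free monogenic inverse monoid. -/
abbrev FIM1 := (conGen FIMRel1).Quotient

/-- The generator `x` of the free monogenic inverse monoid. -/
def mx : FIM1 := (conGen FIMRel1).mk' (FreeMonoid.of true)

/-- The (generalized) inverse `y` of the generator. -/
def my : FIM1 := (conGen FIMRel1).mk' (FreeMonoid.of false)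

/-- The monoid algebra `ℤM` of the free monogenic inverse monoid. -/
abbrev R : Type := MonoidAlgebra ℤ FIM1

/-- The image of the generator `x` in `ℤM`. -/
noncomputable def Xg : R := MonoidAlgebra.of ℤ FIM1 mx

/-- The image of `y` in `ℤM`. -/
noncomputable def Yg : R := MonoidAlgebra.of ℤ FIM1 my

/-- The left `R`-linear map `R × R → R` with `(1,0) ↦ x - 1` and `(0,1) ↦ y - 1`. -/
noncomputable def d1 : (R × R) →ₗ[R] R where
  toFun p := p.1 * (Xg - 1) + p.2 * (Yg - 1)
  map_add' p q := by
    simp only [Prod.fst_add, Prod.snd_add, add_mul]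
    abel
  map_smul' r p := by
    simp only [Prod.smul_fst, Prod.smul_snd, smul_eq_mul, RingHom.id_apply, mul_add, mul_assoc]

/-- `m·e_x := (m, 0)` in `R × R`. -/
noncomputable def ex (r : R) : R × R := (r, 0)

/-- `m·e_y := (0, m)` in `R × R`. -/
noncomputable def ey (r : R) : R × R := (0, r)

/-- `c₁(n,k) := xⁿy^{k−1}·e_y + xⁿyᵏ·e_x` (for `0 < k ≤ n`). -/
noncomputable def c1 (n k : ℕ) : R × R :=
  ey (Xg ^ n * Yg ^ (k - 1)) + ex (Xg ^ n * Yg ^ k)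

/-- `c₂(n,k,j) := xⁿyᵏx^{j−1}·e_x + xⁿyᵏxʲ·e_y` (for `0 ≤ n < k`, `0 < j ≤ k`). -/
noncomputable def c2 (n k j : ℕ) : R × R :=
  ex (Xg ^ n * Yg ^ k * Xg ^ (j - 1)) + ey (Xg ^ n * Yg ^ k * Xg ^ j)

/-- `β(n,k) := Σ_{i<k} xⁿyⁱ·e_y + Σ_{j<k} xⁿyᵏxʲ·e_x + xⁿyᵏxᵏ·e_x − xⁿ·e_x
  − Σ_{i≤k} x^{n+1}yⁱ·e_y − Σ_{j≤k} x^{n+1}y^{k+1}xʲ·e_x` (for `0 ≤ n < k`). -/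
noncomputable def beta (n k : ℕ) : R × R :=
  (∑ i ∈ Finset.range k, ey (Xg ^ n * Yg ^ i)) +
  (∑ j ∈ Finset.range k, ex (Xg ^ n * Yg ^ k * Xg ^ j)) +
  ex (Xg ^ n * Yg ^ k * Xg ^ k) - ex (Xg ^ n) -
  (∑ i ∈ Finset.range (k + 1), ey (Xg ^ (n + 1) * Yg ^ i)) -
  (∑ j ∈ Finset.range (k + 1), ex (Xg ^ (n + 1) * Yg ^ (k + 1) * Xg ^ j))

/-- `W₀`: the ℤ-span of all `c₁(n,k)` with `0 < k ≤ n` and all `c₂(n,k,j)`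
with `0 ≤ n < k`, `0 < j ≤ k`. -/
noncomputable def W0 : Submodule ℤ (R × R) :=
  Submodule.span ℤ
    ({v | ∃ n k, 0 < k ∧ k ≤ n ∧ v = c1 n k} ∪
     {v | ∃ n k j, n < k ∧ 0 < j ∧ j ≤ k ∧ v = c2 n k j})


section Aux

/-! ### Lemmas about `winv` -/

lemma winv_mul (u v : FreeMonoid Bool) : winv (u * v) = winv v * winv u := by simp [winv]
lemma winv_of (b : Bool) : winv (FreeMonoid.of b) = FreeMonoid.of (!b) := by simp [winv]
lemma winv_one : winv 1 = 1 := by simp [winv]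
lemma winv_pow_of (b : Bool) (a : ℕ) : winv (FreeMonoid.of b ^ a) = FreeMonoid.of (!b) ^ a := by
  induction a with
  | zero => simpa using winv_one
  | succ n ih => rw [pow_succ, winv_mul, ih, winv_of, ← pow_succ']

/-! ### Relations in the free monogenic inverse monoid -/

lemma mx_pow (a : ℕ) : mx ^ a = (conGen FIMRel1).mk' (FreeMonoid.of true ^ a) :=
  (map_pow _ _ _).symm
lemma my_pow (a : ℕ) : my ^ a = (conGen FIMRel1).mk' (FreeMonoid.of false ^ a) :=
  (map_pow _ _ _).symm

lemma lemA (a : ℕ) : mx ^ a * my ^ a * mx ^ a = mx ^ a := by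
  rw [mx_pow, my_pow, ← map_mul, ← map_mul]
  refine (Con.eq _).2 (ConGen.Rel.of _ _ ?_)
  simpa [winv_pow_of] using FIMRel1.idem (FreeMonoid.of true ^ a)

lemma lemB (a : ℕ) : my ^ a * mx ^ a * my ^ a = my ^ a := by
  rw [mx_pow, my_pow, ← map_mul, ← map_mul]
  refine (Con.eq _).2 (ConGen.Rel.of _ _ ?_)
  simpa [winv_pow_of] using FIMRel1.idem (FreeMonoid.of false ^ a)

lemma lemC (a b : ℕ) :
    mx ^ a * my ^ a * (my ^ b * mx ^ b) = my ^ b * mx ^ b * (mx ^ a * my ^ a) := by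
  simp only [mx_pow, my_pow, ← map_mul]
  refine (Con.eq _).2 (ConGen.Rel.of _ _ ?_)
  simpa [winv_pow_of] using FIMRel1.comm (FreeMonoid.of true ^ a) (FreeMonoid.of false ^ b)

lemma R1' (i j : ℕ) :
    (mx ^ j * mx ^ i) * (my ^ i * my ^ j) * mx ^ j = (mx ^ j * mx ^ i) * my ^ i := by
  calc (mx ^ j * mx ^ i) * (my ^ i * my ^ j) * mx ^ j
      = mx ^ j * (mx ^ i * my ^ i * (my ^ j * mx ^ j)) := by simp [mul_assoc]
    _ = mx ^ j * (my ^ j * mx ^ j * (mx ^ i * my ^ i)) := by rw [lemC]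
    _ = (mx ^ j * my ^ j * mx ^ j) * (mx ^ i * my ^ i) := by simp [mul_assoc]
    _ = mx ^ j * (mx ^ i * my ^ i) := by rw [lemA]
    _ = (mx ^ j * mx ^ i) * my ^ i := by simp [mul_assoc]

lemma R1 (k j : ℕ) (h : j ≤ k) : mx ^ k * my ^ k * mx ^ j = mx ^ k * my ^ (k - j) := by
  obtain ⟨i, rfl⟩ := Nat.exists_eq_add_of_le h
  have h1 : mx ^ (j + i) = mx ^ j * mx ^ i := pow_add mx j i
  have h2 : my ^ (j + i) = my ^ i * my ^ j := by rw [add_comm]; exact pow_add my i j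
  rw [h1, h2, Nat.add_sub_cancel_left]
  exact R1' i j

lemma R2' (i m : ℕ) :
    (my ^ m * my ^ i) * (mx ^ i * mx ^ m) * my ^ m = (my ^ m * my ^ i) * mx ^ i := by
  calc (my ^ m * my ^ i) * (mx ^ i * mx ^ m) * my ^ m
      = my ^ m * (my ^ i * mx ^ i * (mx ^ m * my ^ m)) := by simp [mul_assoc]
    _ = my ^ m * (mx ^ m * my ^ m * (my ^ i * mx ^ i)) := by rw [← lemC]
    _ = (my ^ m * mx ^ m * my ^ m) * (my ^ i * mx ^ i) := by simp [mul_assoc]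
    _ = my ^ m * (my ^ i * mx ^ i) := by rw [lemB]
    _ = (my ^ m * my ^ i) * mx ^ i := by simp [mul_assoc]

lemma R2 (n m : ℕ) (h : m ≤ n) : my ^ n * mx ^ n * my ^ m = my ^ n * mx ^ (n - m) := by
  obtain ⟨i, rfl⟩ := Nat.exists_eq_add_of_le h
  have h1 : my ^ (m + i) = my ^ m * my ^ i := pow_add my m i
  have h2 : mx ^ (m + i) = mx ^ i * mx ^ m := by rw [add_comm]; exact pow_add mx i m
  rw [h1, h2, Nat.add_sub_cancel_left]
  exact R2' i m

lemma R3 (m : ℕ) : my * mx ^ (m + 1) = mx ^ m * my ^ (m + 1) * mx ^ (m + 1) := by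
  have hc : my * mx * (mx ^ m * my ^ m) = mx ^ m * my ^ m * (my * mx) := by
    have := lemC m 1
    simpa [pow_one] using this.symm
  calc my * mx ^ (m + 1) = (my * mx) * mx ^ m := by rw [pow_succ']; simp [mul_assoc]
    _ = (my * mx) * (mx ^ m * my ^ m * mx ^ m) := by rw [lemA]
    _ = (my * mx * (mx ^ m * my ^ m)) * mx ^ m := by simp [mul_assoc]
    _ = (mx ^ m * my ^ m * (my * mx)) * mx ^ m := by rw [hc]
    _ = mx ^ m * (my ^ m * my) * (mx * mx ^ m) := by simp [mul_assoc]
    _ = mx ^ m * my ^ (m + 1) * mx ^ (m + 1) := by rw [← pow_succ, ← pow_succ']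

lemma L2 (n m : ℕ) (hm : m ≤ n) (hn : 1 ≤ n) :
    my * (mx ^ n * my ^ m) = mx ^ (n - 1) * my ^ n * mx ^ (n - m) := by
  obtain ⟨p, rfl⟩ := Nat.exists_eq_add_of_le hn
  calc my * (mx ^ (1 + p) * my ^ m) = (my * mx ^ (p + 1)) * my ^ m := by
        rw [add_comm 1 p]; simp [mul_assoc]
    _ = mx ^ p * (my ^ (p + 1) * mx ^ (p + 1) * my ^ m) := by rw [R3]; simp [mul_assoc]
    _ = mx ^ p * (my ^ (p + 1) * mx ^ (p + 1 - m)) := by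
        rw [R2 (p + 1) m (by omega)]
    _ = mx ^ (1 + p - 1) * my ^ (1 + p) * mx ^ (1 + p - m) := by
        rw [show 1 + p - 1 = p by omega, add_comm 1 p]; simp [mul_assoc]

lemma L3 (n k : ℕ) (hn : 1 ≤ n) (hk : n ≤ k) :
    my * (mx ^ n * my ^ k) = mx ^ (n - 1) * my ^ k := by
  have hks : my ^ k = my ^ n * my ^ (k - n) := by
    rw [← pow_add, Nat.add_sub_cancel' hk]
  calc my * (mx ^ n * my ^ k) = (my * (mx ^ n * my ^ n)) * my ^ (k - n) := by
        rw [hks]; simp [mul_assoc]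
    _ = (mx ^ (n - 1) * my ^ n * mx ^ (n - n)) * my ^ (k - n) := by rw [L2 n n le_rfl hn]
    _ = mx ^ (n - 1) * my ^ k := by
        rw [Nat.sub_self, pow_zero, mul_one, hks]; simp [mul_assoc]

/-! ### Transfer to the monoid algebra -/

noncomputable abbrev og : FIM1 →* R := MonoidAlgebra.of ℤ FIM1

lemma Xg_pow (n : ℕ) : Xg ^ n = og (mx ^ n) := (map_pow og mx n).symm
lemma Yg_pow (n : ℕ) : Yg ^ n = og (my ^ n) := (map_pow og my n).symm
lemma Yg_def : Yg = og my := rfl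
lemma Xg_def : Xg = og mx := rfl

lemma rR1 (k j : ℕ) (h : j ≤ k) : Xg ^ k * Yg ^ k * Xg ^ j = Xg ^ k * Yg ^ (k - j) := by
  simp only [Xg_def, Yg_def, ← map_pow, ← map_mul]
  exact congrArg og (R1 k j h)

lemma rL2 (n m : ℕ) (hm : m ≤ n) (hn : 1 ≤ n) :
    Yg * (Xg ^ n * Yg ^ m) = Xg ^ (n - 1) * Yg ^ n * Xg ^ (n - m) := by
  simp only [Xg_def, Yg_def, ← map_pow, ← map_mul]
  exact congrArg og (L2 n m hm hn)

lemma rL3 (n k : ℕ) (hn : 1 ≤ n) (hk : n ≤ k) :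
    Yg * (Xg ^ n * Yg ^ k) = Xg ^ (n - 1) * Yg ^ k := by
  simp only [Xg_def, Yg_def, ← map_pow, ← map_mul]
  exact congrArg og (L3 n k hn hk)

/-! ### Membership lemmas -/

lemma mem_c1 (n k : ℕ) (hk : 0 < k) (hkn : k ≤ n) : c1 n k ∈ W0 :=
  Submodule.subset_span (Set.mem_union_left _ ⟨n, k, hk, hkn, rfl⟩)

lemma mem_c2 (n k j : ℕ) (hnk : n < k) (hj : 0 < j) (hjk : j ≤ k) : c2 n k j ∈ W0 :=
  Submodule.subset_span (Set.mem_union_right _ ⟨n, k, j, hnk, hj, hjk, rfl⟩)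

lemma c1_fst (n k : ℕ) : (c1 n k).1 = Xg ^ n * Yg ^ k := by simp [c1, ex, ey]
lemma c1_snd (n k : ℕ) : (c1 n k).2 = Xg ^ n * Yg ^ (k - 1) := by simp [c1, ex, ey]
lemma c2_fst (n k j : ℕ) : (c2 n k j).1 = Xg ^ n * Yg ^ k * Xg ^ (j - 1) := by simp [c2, ex, ey]
lemma c2_snd (n k j : ℕ) : (c2 n k j).2 = Xg ^ n * Yg ^ k * Xg ^ j := by simp [c2, ex, ey]

lemma pair_eq {a b : R} {p : R × R} (h1 : a = p.1) (h2 : b = p.2) : (a, b) = p := by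
  rw [h1, h2]

lemma act_x_c1 (n k : ℕ) (hk : 0 < k) (hkn : k ≤ n) :
    (Xg * (c1 n k).1, Xg * (c1 n k).2) ∈ W0 := by
  have h1 : Xg * (c1 n k).1 = (c1 (n + 1) k).1 := by
    rw [c1_fst, c1_fst, ← mul_assoc, ← pow_succ']
  have h2 : Xg * (c1 n k).2 = (c1 (n + 1) k).2 := by
    rw [c1_snd, c1_snd, ← mul_assoc, ← pow_succ']
  rw [pair_eq h1 h2]
  exact mem_c1 _ _ hk (le_trans hkn (Nat.le_succ n))

lemma act_x_c2 (n k j : ℕ) (hnk : n < k) (hj : 0 < j) (hjk : j ≤ k) :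
    (Xg * (c2 n k j).1, Xg * (c2 n k j).2) ∈ W0 := by
  rcases Nat.lt_or_ge (n + 1) k with hlt | hge
  · have h1 : Xg * (c2 n k j).1 = (c2 (n + 1) k j).1 := by
      rw [c2_fst, c2_fst, ← mul_assoc, ← mul_assoc, ← pow_succ']
    have h2 : Xg * (c2 n k j).2 = (c2 (n + 1) k j).2 := by
      rw [c2_snd, c2_snd, ← mul_assoc, ← mul_assoc, ← pow_succ']
    rw [pair_eq h1 h2]
    exact mem_c2 _ _ _ hlt hj hjk
  · have hk1 : k = n + 1 := by omega
    subst hk1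
    have h1 : Xg * (c2 n (n + 1) j).1 = (c1 (n + 1) (n + 1 - j + 1)).1 := by
      rw [c2_fst, c1_fst, ← mul_assoc, ← mul_assoc, ← pow_succ',
        rR1 (n + 1) (j - 1) (by omega),
        show n + 1 - (j - 1) = n + 1 - j + 1 from by omega]
    have h2 : Xg * (c2 n (n + 1) j).2 = (c1 (n + 1) (n + 1 - j + 1)).2 := by
      rw [c2_snd, c1_snd, ← mul_assoc, ← mul_assoc, ← pow_succ',
        rR1 (n + 1) j hjk, Nat.add_sub_cancel]
    rw [pair_eq h1 h2]
    exact mem_c1 _ _ (by omega) (by omega)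

lemma act_y_c1 (n k : ℕ) (hk : 0 < k) (hkn : k ≤ n) :
    (Yg * (c1 n k).1, Yg * (c1 n k).2) ∈ W0 := by
  have hn : 1 ≤ n := le_trans hk hkn
  have h1 : Yg * (c1 n k).1 = (c2 (n - 1) n (n - k + 1)).1 := by
    rw [c1_fst, c2_fst, rL2 n k hkn hn, Nat.add_sub_cancel]
  have h2 : Yg * (c1 n k).2 = (c2 (n - 1) n (n - k + 1)).2 := by
    rw [c1_snd, c2_snd, rL2 n (k - 1) (by omega) hn,
      show n - (k - 1) = n - k + 1 from by omega]
  rw [pair_eq h1 h2]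
  exact mem_c2 _ _ _ (by omega) (by omega) (by omega)

lemma act_y_c2 (n k j : ℕ) (hnk : n < k) (hj : 0 < j) (hjk : j ≤ k) :
    (Yg * (c2 n k j).1, Yg * (c2 n k j).2) ∈ W0 := by
  rcases Nat.eq_zero_or_pos n with hn0 | hn1
  · subst hn0
    have h1 : Yg * (c2 0 k j).1 = (c2 0 (k + 1) j).1 := by
      rw [c2_fst, c2_fst, pow_zero, one_mul, one_mul, ← mul_assoc, ← pow_succ']
    have h2 : Yg * (c2 0 k j).2 = (c2 0 (k + 1) j).2 := by
      rw [c2_snd, c2_snd, pow_zero, one_mul, one_mul, ← mul_assoc, ← pow_succ']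
    rw [pair_eq h1 h2]
    exact mem_c2 _ _ _ (by omega) hj (by omega)
  · have h1 : Yg * (c2 n k j).1 = (c2 (n - 1) k j).1 := by
      rw [c2_fst, c2_fst, ← mul_assoc, rL3 n k hn1 (le_of_lt hnk)]
    have h2 : Yg * (c2 n k j).2 = (c2 (n - 1) k j).2 := by
      rw [c2_snd, c2_snd, ← mul_assoc, rL3 n k hn1 (le_of_lt hnk)]
    rw [pair_eq h1 h2]
    exact mem_c2 _ _ _ (by omega) hj hjk

lemma act_gen (r : R)
    (h : ∀ v ∈ ({v | ∃ n k, 0 < k ∧ k ≤ n ∧ v = c1 n k} ∪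
      {v | ∃ n k j, n < k ∧ 0 < j ∧ j ≤ k ∧ v = c2 n k j} : Set (R × R)),
      (r * v.1, r * v.2) ∈ W0) :
    ∀ w ∈ W0, (r * w.1, r * w.2) ∈ W0 := by
  intro w hw
  induction hw using Submodule.span_induction with
  | mem v hv => exact h v hv
  | zero => simp only [Prod.fst_zero, Prod.snd_zero, mul_zero]; exact zero_mem _
  | add a b _ _ iha ihb =>
      have h1 : r * (a + b).1 = r * a.1 + r * b.1 := by rw [Prod.fst_add, mul_add]
      have h2 : r * (a + b).2 = r * a.2 + r * b.2 := by rw [Prod.snd_add, mul_add]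
      rw [h1, h2]
      simpa [Prod.mk_add_mk] using add_mem iha ihb
  | smul z a _ iha =>
      have h1 : r * (z • a).1 = z • (r * a.1) := by rw [Prod.smul_fst, mul_smul_comm]
      have h2 : r * (z • a).2 = z • (r * a.2) := by rw [Prod.smul_snd, mul_smul_comm]
      rw [h1, h2]
      simpa [Prod.smul_mk] using Submodule.smul_mem _ z iha

lemma act_X : ∀ w ∈ W0, (Xg * w.1, Xg * w.2) ∈ W0 := by
  refine act_gen Xg ?_
  rintro v (⟨n, k, hk, hkn, rfl⟩ | ⟨n, k, j, hnk, hj, hjk, rfl⟩)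
  · exact act_x_c1 n k hk hkn
  · exact act_x_c2 n k j hnk hj hjk

lemma act_Y : ∀ w ∈ W0, (Yg * w.1, Yg * w.2) ∈ W0 := by
  refine act_gen Yg ?_
  rintro v (⟨n, k, hk, hkn, rfl⟩ | ⟨n, k, j, hnk, hj, hjk, rfl⟩)
  · exact act_y_c1 n k hk hkn
  · exact act_y_c2 n k j hnk hj hjk

end Aux

/-- `W₀` is closed under the diagonal left action of `M` on `R × R`,
i.e. `W₀` is a left `ℤM`-submodule. -/
theorem W0_submodule :
    ∀ (m : FIM1) (w : R × R), w ∈ W0 →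
      (MonoidAlgebra.of ℤ FIM1 m * w.1, MonoidAlgebra.of ℤ FIM1 m * w.2) ∈ W0 := by
  intro m
  induction m using Con.induction_on with
  | _ u =>
    induction u using FreeMonoid.inductionOn with
    | one =>
        intro w hw
        have h1 : ((1 : FreeMonoid Bool) : FIM1) = 1 := rfl
        simp only [h1, map_one, one_mul]
        exact hw
    | of b =>
        cases b with
        | true => exact fun w hw => act_X w hw
        | false => exact fun w hw => act_Y w hw
    | mul u v ihu ihv =>
        intro w hw
        have hm : ((u * v : FreeMonoid Bool) : FIM1) = (u : FIM1) * (v : FIM1) := rfl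
        rw [hm, map_mul, mul_assoc, mul_assoc]
        have := ihu _ (ihv w hw)
        exact this
end

section
/- For every natural number K ≥ 0, the subgroup W_K, defined as the ℤ-span inside R × R of all elements c₁(n,k) with 0 < k ≤ n, all elements c₂(n,k,j) with 0 ≤ n < k and 0 < j ≤ k, and all elements β(n,k) with 0 ≤ n < k ≤ K, is closed under the left action of M on R × R; that is, W_K is a left ℤM-submodule of R × R. -/
/-- `W_K`: the ℤ-span of all `c₁(n,k)`, all `c₂(n,k,j)` and the `β(n,k)` with `k ≤ K`. -/
noncomputable def W (K : ℕ) : Submodule ℤ (R × R) :=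
  Submodule.span ℤ
    ({v | ∃ n k, 0 < k ∧ k ≤ n ∧ v = c1 n k} ∪
     {v | ∃ n k j, n < k ∧ 0 < j ∧ j ≤ k ∧ v = c2 n k j} ∪
     {v | ∃ n k, n < k ∧ k ≤ K ∧ v = beta n k})

section GenericMonoid
variable {M : Type*} [Monoid M] (X Y : M)
variable (idemX : ∀ n : ℕ, X ^ n * Y ^ n * X ^ n = X ^ n)
variable (idemY : ∀ n : ℕ, Y ^ n * X ^ n * Y ^ n = Y ^ n)
variable (commXY : ∀ a : ℕ, X ^ a * Y ^ a * (Y * X) = Y * X * (X ^ a * Y ^ a))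
variable (commYX : ∀ a : ℕ, Y ^ a * X ^ a * (X * Y) = X * Y * (Y ^ a * X ^ a))

include idemX in
lemma aux_xyx : X * Y * X = X := by simpa using idemX 1
include idemY in
lemma aux_yxy : Y * X * Y = Y := by simpa using idemY 1

include idemX commXY in
lemma aux_BxX (d b : ℕ) : X ^ (b + d + 1) * Y ^ (b + 1) * X = X ^ (b + d + 1) * Y ^ b :=
  calc X ^ (b + d + 1) * Y ^ (b + 1) * X
      = X ^ (d + 1) * (X ^ b * Y ^ b * (Y * X)) := by
        rw [show b + d + 1 = d + 1 + b by omega, pow_add, pow_succ Y b]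
        simp only [mul_assoc]
    _ = X ^ (d + 1) * (Y * X * (X ^ b * Y ^ b)) := by rw [commXY b]
    _ = X ^ d * (X * Y * X) * (X ^ b * Y ^ b) := by
        rw [pow_succ X d]; simp only [mul_assoc]
    _ = X ^ d * X * (X ^ b * Y ^ b) := by rw [aux_xyx X Y idemX]
    _ = X ^ (b + d + 1) * Y ^ b := by
        rw [show b + d + 1 = d + 1 + b by omega, pow_add, pow_succ X d]
        simp only [mul_assoc]

include idemY commYX in
lemma aux_BxY (d b : ℕ) : Y ^ (b + d + 1) * X ^ (b + 1) * Y = Y ^ (b + d + 1) * X ^ b :=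
  calc Y ^ (b + d + 1) * X ^ (b + 1) * Y
      = Y ^ (d + 1) * (Y ^ b * X ^ b * (X * Y)) := by
        rw [show b + d + 1 = d + 1 + b by omega, pow_add, pow_succ X b]
        simp only [mul_assoc]
    _ = Y ^ (d + 1) * (X * Y * (Y ^ b * X ^ b)) := by rw [commYX b]
    _ = Y ^ d * (Y * X * Y) * (Y ^ b * X ^ b) := by
        rw [pow_succ Y d]; simp only [mul_assoc]
    _ = Y ^ d * Y * (Y ^ b * X ^ b) := by rw [aux_yxy X Y idemY]
    _ = Y ^ (b + d + 1) * X ^ b := by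
        rw [show b + d + 1 = d + 1 + b by omega, pow_add, pow_succ Y d]
        simp only [mul_assoc]

include idemX commXY in
lemma aux_BmX : ∀ m d e : ℕ, X ^ (m + e + d) * Y ^ (m + e) * X ^ m = X ^ (m + e + d) * Y ^ e := by
  intro m
  induction m with
  | zero => intro d e; simp
  | succ m ih =>
    intro d e
    calc X ^ (m + 1 + e + d) * Y ^ (m + 1 + e) * X ^ (m + 1)
        = X ^ ((m + e) + d + 1) * Y ^ ((m + e) + 1) * X * X ^ m := by
          rw [show m + 1 + e + d = m + e + d + 1 by omega, show m + 1 + e = m + e + 1 by omega,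
            pow_succ' X m]
          simp only [mul_assoc]
      _ = X ^ ((m + e) + d + 1) * Y ^ (m + e) * X ^ m := by
          rw [aux_BxX X Y idemX commXY d (m + e)]
      _ = X ^ (m + e + (d + 1)) * Y ^ (m + e) * X ^ m := by
          rw [show m + e + d + 1 = m + e + (d + 1) by omega]
      _ = X ^ (m + e + (d + 1)) * Y ^ e := ih (d + 1) e
      _ = X ^ (m + 1 + e + d) * Y ^ e := by rw [show m + e + (d + 1) = m + 1 + e + d by omega]

include idemY commYX in
lemma aux_BmY : ∀ m d e : ℕ, Y ^ (m + e + d) * X ^ (m + e) * Y ^ m = Y ^ (m + e + d) * X ^ e := by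
  intro m
  induction m with
  | zero => intro d e; simp
  | succ m ih =>
    intro d e
    calc Y ^ (m + 1 + e + d) * X ^ (m + 1 + e) * Y ^ (m + 1)
        = Y ^ ((m + e) + d + 1) * X ^ ((m + e) + 1) * Y * Y ^ m := by
          rw [show m + 1 + e + d = m + e + d + 1 by omega, show m + 1 + e = m + e + 1 by omega,
            pow_succ' Y m]
          simp only [mul_assoc]
      _ = Y ^ ((m + e) + d + 1) * X ^ (m + e) * Y ^ m := by
          rw [aux_BxY X Y idemY commYX d (m + e)]
      _ = Y ^ (m + e + (d + 1)) * X ^ (m + e) * Y ^ m := by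
          rw [show m + e + d + 1 = m + e + (d + 1) by omega]
      _ = Y ^ (m + e + (d + 1)) * X ^ e := ih (d + 1) e
      _ = Y ^ (m + 1 + e + d) * X ^ e := by rw [show m + e + (d + 1) = m + 1 + e + d by omega]

include idemX commXY in
lemma aux_Cn (n : ℕ) : Y * X ^ (n + 1) = X ^ n * Y ^ (n + 1) * X ^ (n + 1) :=
  calc Y * X ^ (n + 1)
      = Y * X * X ^ n := by rw [pow_succ' X n]; simp only [mul_assoc]
    _ = Y * X * (X ^ n * Y ^ n * X ^ n) := by rw [idemX n]
    _ = Y * X * (X ^ n * Y ^ n) * X ^ n := by simp only [mul_assoc]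
    _ = X ^ n * Y ^ n * (Y * X) * X ^ n := by rw [← commXY n]
    _ = X ^ n * Y ^ (n + 1) * X ^ (n + 1) := by
        rw [pow_succ Y n, pow_succ' X n]; simp only [mul_assoc]

include idemX idemY commXY in
lemma aux_Dn (n e : ℕ) : Y * X ^ (n + 1) * Y ^ (n + 1 + e) = X ^ n * Y ^ (n + 1 + e) :=
  calc Y * X ^ (n + 1) * Y ^ (n + 1 + e)
      = Y * X ^ (n + 1) * (Y ^ (n + 1) * Y ^ e) := by rw [pow_add Y (n + 1) e]
    _ = X ^ n * (Y ^ (n + 1) * X ^ (n + 1) * Y ^ (n + 1)) * Y ^ e := by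
        rw [aux_Cn X Y idemX commXY n]; simp only [mul_assoc]
    _ = X ^ n * Y ^ (n + 1) * Y ^ e := by rw [idemY (n + 1)]; try simp only [mul_assoc]
    _ = X ^ n * Y ^ (n + 1 + e) := by rw [pow_add Y (n + 1) e]; try simp only [mul_assoc]

include idemX idemY commXY commYX in
lemma aux_YXn (n i : ℕ) (h : i ≤ n + 1) :
    Y * X ^ (n + 1) * Y ^ i = X ^ n * Y ^ (n + 1) * X ^ (n + 1 - i) := by
  obtain ⟨e, he⟩ : ∃ e, n + 1 = i + e := ⟨n + 1 - i, by omega⟩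
  have hb := aux_BmY X Y idemY commYX i 0 e
  simp only [Nat.add_zero] at hb
  calc Y * X ^ (n + 1) * Y ^ i
      = X ^ n * (Y ^ (n + 1) * X ^ (n + 1) * Y ^ i) := by
        rw [aux_Cn X Y idemX commXY n]; simp only [mul_assoc]
    _ = X ^ n * (Y ^ (i + e) * X ^ (i + e) * Y ^ i) := by rw [← he]
    _ = X ^ n * (Y ^ (i + e) * X ^ e) := by rw [hb]
    _ = X ^ n * Y ^ (n + 1) * X ^ (n + 1 - i) := by
        rw [show n + 1 - i = e by omega, he]; simp only [mul_assoc]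

end GenericMonoid

namespace FIMaux

def Q : FreeMonoid Bool →* FIM1 := Con.mk' _

lemma qrel {a b : FreeMonoid Bool} (h : FIMRel1 a b) : Q a = Q b :=
  (Con.eq _).mpr (ConGen.Rel.of a b h)

lemma winv_of (b : Bool) : winv (FreeMonoid.of b) = FreeMonoid.of (!b) := rfl

lemma winv_mul (u v : FreeMonoid Bool) : winv (u * v) = winv v * winv u := by
  simp [winv, FreeMonoid.toList_mul]

lemma winv_pow (w : FreeMonoid Bool) (n : ℕ) : winv (w ^ n) = winv w ^ n := by
  induction n with
  | zero => simp [winv]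
  | succ n ih => rw [pow_succ, winv_mul, ih, pow_succ']

lemma mx_pow (n : ℕ) : mx ^ n = Q (FreeMonoid.of true ^ n) := by rw [map_pow]; rfl
lemma my_pow (n : ℕ) : my ^ n = Q (FreeMonoid.of false ^ n) := by rw [map_pow]; rfl

lemma idemX (n : ℕ) : mx ^ n * my ^ n * mx ^ n = mx ^ n := by
  rw [mx_pow, my_pow, ← map_mul, ← map_mul]
  have h := qrel (FIMRel1.idem (FreeMonoid.of true ^ n))
  rwa [winv_pow, winv_of] at h

lemma idemY (n : ℕ) : my ^ n * mx ^ n * my ^ n = my ^ n := by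
  rw [mx_pow, my_pow, ← map_mul, ← map_mul]
  have h := qrel (FIMRel1.idem (FreeMonoid.of false ^ n))
  rwa [winv_pow, winv_of] at h

lemma commXY (a : ℕ) : mx ^ a * my ^ a * (my * mx) = my * mx * (mx ^ a * my ^ a) := by
  have h := qrel (FIMRel1.comm (FreeMonoid.of true ^ a) (FreeMonoid.of false))
  rw [winv_pow, winv_of, winv_of] at h
  rw [mx_pow, my_pow, show my = Q (FreeMonoid.of false) from rfl, show mx = Q (FreeMonoid.of true) from rfl]
  simpa [map_mul] using h

lemma commYX (a : ℕ) : my ^ a * mx ^ a * (mx * my) = mx * my * (my ^ a * mx ^ a) := by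
  have h := qrel (FIMRel1.comm (FreeMonoid.of false ^ a) (FreeMonoid.of true))
  rw [winv_pow, winv_of, winv_of] at h
  rw [mx_pow, my_pow, show my = Q (FreeMonoid.of false) from rfl, show mx = Q (FreeMonoid.of true) from rfl]
  simpa [map_mul] using h

lemma fBmX (m d e : ℕ) : mx ^ (m + e + d) * my ^ (m + e) * mx ^ m = mx ^ (m + e + d) * my ^ e :=
  aux_BmX mx my idemX commXY m d e

lemma fDn (n e : ℕ) : my * mx ^ (n + 1) * my ^ (n + 1 + e) = mx ^ n * my ^ (n + 1 + e) :=
  aux_Dn mx my idemX idemY commXY n e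

lemma fYXn (n i : ℕ) (h : i ≤ n + 1) :
    my * mx ^ (n + 1) * my ^ i = mx ^ n * my ^ (n + 1) * mx ^ (n + 1 - i) :=
  aux_YXn mx my idemX idemY commXY commYX n i h

end FIMaux
namespace FIMaux

noncomputable def Ew (n k j : ℕ) : R := MonoidAlgebra.of ℤ FIM1 (mx ^ n * my ^ k * mx ^ j)

lemma Ew_XYX (n k j : ℕ) : Xg ^ n * Yg ^ k * Xg ^ j = Ew n k j := by
  simp [Ew, Xg, Yg, map_mul, map_pow]

lemma Ew_XY (n k : ℕ) : Xg ^ n * Yg ^ k = Ew n k 0 := by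
  simp [Ew, Xg, Yg, map_mul, map_pow]

lemma Ew_X (n : ℕ) : Xg ^ n = Ew n 0 0 := by
  simp [Ew, Xg, map_pow]

lemma X_mul_Ew (n k j : ℕ) : Xg * Ew n k j = Ew (n + 1) k j := by
  simp only [Ew, Xg, ← map_mul]
  congr 1
  rw [pow_succ' mx n]; simp only [mul_assoc]

lemma Y_mul_Ew0 (k j : ℕ) : Yg * Ew 0 k j = Ew 0 (k + 1) j := by
  simp only [Ew, Yg, ← map_mul]
  congr 1
  rw [pow_succ' my k]; simp only [pow_zero, one_mul, mul_assoc]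

lemma Y_mul_EwD (n k j : ℕ) (h : n + 1 ≤ k) : Yg * Ew (n + 1) k j = Ew n k j := by
  obtain ⟨e, rfl⟩ : ∃ e, k = n + 1 + e := ⟨k - (n + 1), by omega⟩
  simp only [Ew, Yg, ← map_mul]
  congr 1
  rw [← mul_assoc, ← mul_assoc, fDn n e]

lemma Y_mul_EwC (n i : ℕ) (h : i ≤ n + 1) : Yg * Ew (n + 1) i 0 = Ew n (n + 1) (n + 1 - i) := by
  simp only [Ew, Yg, ← map_mul]
  congr 1
  rw [pow_zero, mul_one, ← mul_assoc, fYXn n i h]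

lemma EwBB (k j : ℕ) (h : j ≤ k) : Ew k k j = Ew k (k - j) 0 := by
  obtain ⟨e, rfl⟩ : ∃ e, k = j + e := ⟨k - j, by omega⟩
  have hb := fBmX j 0 e
  simp only [Nat.add_zero] at hb
  simp only [Ew]
  congr 1
  rw [hb, show j + e - j = e by omega, pow_zero, mul_one]

lemma smul_ex (r s : R) : r • ex s = ex (r * s) := by
  simp [ex, smul_eq_mul, Prod.smul_mk]

lemma smul_ey (r s : R) : r • ey s = ey (r * s) := by
  simp [ey, smul_eq_mul, Prod.smul_mk]

lemma c1_Ew (n k : ℕ) : c1 n k = ey (Ew n (k - 1) 0) + ex (Ew n k 0) := by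
  rw [c1, Ew_XY, Ew_XY]

lemma c2_Ew (n k j : ℕ) : c2 n k j = ex (Ew n k (j - 1)) + ey (Ew n k j) := by
  rw [c2, Ew_XYX, Ew_XYX]

lemma beta_Ew (n k : ℕ) : beta n k =
    (∑ i ∈ Finset.range k, ey (Ew n i 0)) +
    (∑ j ∈ Finset.range k, ex (Ew n k j)) +
    ex (Ew n k k) - ex (Ew n 0 0) -
    (∑ i ∈ Finset.range (k + 1), ey (Ew (n + 1) i 0)) -
    (∑ j ∈ Finset.range (k + 1), ex (Ew (n + 1) (k + 1) j)) := by
  rw [beta]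
  simp only [Ew_XYX]
  simp only [Ew_XY]
  simp only [Ew_X]

end FIMaux

namespace FIMaux

/-! ### helper sum lemmas -/

lemma range_split (f : ℕ → R × R) {m p : ℕ} (h : m ≤ p) :
    ∑ i ∈ Finset.range p, f i =
      (∑ i ∈ Finset.range m, f i) + ∑ i ∈ Finset.Ico m p, f i := by
  simp only [Finset.range_eq_Ico]
  exact (Finset.sum_Ico_consecutive f (Nat.zero_le m) h).symm

lemma reflect_vec (g : ℕ → R × R) (m : ℕ) :
    ∑ i ∈ Finset.range m, g (m - i) = ∑ j ∈ Finset.range m, g (j + 1) := by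
  rw [← Finset.sum_range_reflect (fun j => g (j + 1)) m]
  refine Finset.sum_congr rfl (fun j hj => ?_)
  have := Finset.mem_range.mp hj
  rw [show m - 1 - j + 1 = m - j by omega]

lemma sum_EwBB (m : ℕ) :
    ∑ j ∈ Finset.range m, ex (Ew m m j) = ∑ i ∈ Finset.range m, ex (Ew m (i + 1) 0) := by
  rw [← Finset.sum_range_reflect (fun i => ex (Ew m (i + 1) 0)) m]
  refine Finset.sum_congr rfl (fun j hj => ?_)
  have := Finset.mem_range.mp hj
  rw [EwBB m j (by omega), show m - 1 - j + 1 = m - j by omega]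

lemma c1_Ew' (m i : ℕ) : c1 m (i + 1) = ey (Ew m i 0) + ex (Ew m (i + 1) 0) := by
  rw [c1_Ew, Nat.add_sub_cancel]

/-! ### action on c1 and c2 -/

lemma smulX_c1 (n k : ℕ) : Xg • c1 n k = c1 (n + 1) k := by
  rw [c1_Ew, c1_Ew, smul_add, smul_ey, smul_ex, X_mul_Ew, X_mul_Ew]

lemma smulY_c1 (n k : ℕ) (h1 : 0 < k) (h2 : k ≤ n) :
    Yg • c1 n k = c2 (n - 1) n (n - k + 1) := by
  obtain ⟨n', rfl⟩ : ∃ n', n = n' + 1 := ⟨n - 1, by omega⟩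
  rw [c1_Ew, smul_add, smul_ey, smul_ex,
    Y_mul_EwC n' (k - 1) (by omega), Y_mul_EwC n' k (by omega), c2_Ew,
    show n' + 1 - 1 = n' by omega,
    show n' + 1 - (k - 1) = n' + 1 - k + 1 by omega,
    show n' + 1 - k + 1 - 1 = n' + 1 - k by omega]
  exact add_comm _ _

lemma smulX_c2_lt (n k j : ℕ) : Xg • c2 n k j = c2 (n + 1) k j := by
  rw [c2_Ew, c2_Ew, smul_add, smul_ex, smul_ey, X_mul_Ew, X_mul_Ew]

lemma smulX_c2_eq (n j : ℕ) (hj : 0 < j) (hjk : j ≤ n + 1) :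
    Xg • c2 n (n + 1) j = c1 (n + 1) (n + 1 - j + 1) := by
  rw [c2_Ew, smul_add, smul_ex, smul_ey, X_mul_Ew, X_mul_Ew,
    EwBB (n + 1) (j - 1) (by omega), EwBB (n + 1) j hjk, c1_Ew,
    show n + 1 - (j - 1) = n + 1 - j + 1 by omega,
    show n + 1 - j + 1 - 1 = n + 1 - j by omega]
  exact add_comm _ _

lemma smulY_c2_0 (k j : ℕ) : Yg • c2 0 k j = c2 0 (k + 1) j := by
  rw [c2_Ew, c2_Ew, smul_add, smul_ex, smul_ey, Y_mul_Ew0, Y_mul_Ew0]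

lemma smulY_c2_pos (n k j : ℕ) (h : n + 1 ≤ k) : Yg • c2 (n + 1) k j = c2 n k j := by
  rw [c2_Ew, c2_Ew, smul_add, smul_ex, smul_ey, Y_mul_EwD n k _ h, Y_mul_EwD n k _ h]

/-! ### action on beta -/

lemma smulX_beta (n k : ℕ) : Xg • beta n k = beta (n + 1) k := by
  rw [beta_Ew, beta_Ew]
  simp only [smul_sub, smul_add, Finset.smul_sum, smul_ex, smul_ey, X_mul_Ew]

lemma beta_diag (m : ℕ) :
    beta m m = (∑ i ∈ Finset.range m, c1 m (i + 1))
      - ∑ i ∈ Finset.range (m + 1), c1 (m + 1) (i + 1) := by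
  rw [beta_Ew, sum_EwBB m, sum_EwBB (m + 1), EwBB m m le_rfl, Nat.sub_self]
  simp only [c1_Ew', Finset.sum_add_distrib]
  abel

lemma smulY_beta0 (k : ℕ) : Yg • beta 0 k = -(c2 0 1 1) := by
  have h1 : ∀ a b : ℕ, Yg * Ew 0 a b = Ew 0 (a + 1) b := fun a b => Y_mul_Ew0 a b
  have h2 : ∀ a b : ℕ, Yg * Ew (0 + 1) (a + 1) b = Ew 0 (a + 1) b :=
    fun a b => Y_mul_EwD 0 (a + 1) b (by omega)
  have h3 : Yg * Ew (0 + 1) 0 0 = Ew 0 1 1 := by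
    have := Y_mul_EwC 0 0 (by omega)
    simpa using this
  rw [beta_Ew]
  simp only [smul_sub, smul_add, Finset.smul_sum, smul_ex, smul_ey]
  rw [Finset.sum_range_succ' (fun i => ey (Yg * Ew (0 + 1) i 0)) k]
  simp only [h2, h3, h1]
  rw [Finset.sum_range_succ (fun j => ex (Ew 0 (k + 1) j)) k, c2_Ew]
  norm_num
  abel

lemma smulY_beta_pos (n k : ℕ) (h : n + 1 < k) :
    Yg • beta (n + 1) k = beta n k - beta n (n + 1)
      + (∑ j ∈ Finset.range (n + 1), c2 n (n + 1) (j + 1))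
      - ∑ j ∈ Finset.range (n + 2), c2 (n + 1) (n + 2) (j + 1) := by
  have e1 : ∑ i ∈ Finset.range (n + 1), ey (Yg * Ew (n + 1) i 0)
      = ∑ j ∈ Finset.range (n + 1), ey (Ew n (n + 1) (j + 1)) := by
    rw [← reflect_vec (fun t => ey (Ew n (n + 1) t)) (n + 1)]
    refine Finset.sum_congr rfl (fun i hi => ?_)
    have := Finset.mem_range.mp hi
    rw [Y_mul_EwC n i (by omega)]
  have e2 : ∑ i ∈ Finset.Ico (n + 1) k, ey (Yg * Ew (n + 1) i 0)
      = ∑ i ∈ Finset.Ico (n + 1) k, ey (Ew n i 0) := by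
    refine Finset.sum_congr rfl (fun i hi => ?_)
    have hi' := (Finset.mem_Ico.mp hi).1
    obtain ⟨e, rfl⟩ : ∃ e, i = n + 1 + e := ⟨i - (n + 1), by omega⟩
    rw [Y_mul_EwD n (n + 1 + e) 0 (by omega)]
  have e3 : ∑ j ∈ Finset.range k, ex (Yg * Ew (n + 1) k j)
      = ∑ j ∈ Finset.range k, ex (Ew n k j) :=
    Finset.sum_congr rfl (fun j _ => by rw [Y_mul_EwD n k j (by omega)])
  have e4 : Yg * Ew (n + 1) k k = Ew n k k := Y_mul_EwD n k k (by omega)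
  have e5 : Yg * Ew (n + 1) 0 0 = Ew n (n + 1) (n + 1) := by
    rw [Y_mul_EwC n 0 (by omega), Nat.sub_zero]
  have e6 : ∑ i ∈ Finset.range (n + 2), ey (Yg * Ew (n + 1 + 1) i 0)
      = ∑ j ∈ Finset.range (n + 2), ey (Ew (n + 1) (n + 2) (j + 1)) := by
    rw [← reflect_vec (fun t => ey (Ew (n + 1) (n + 2) t)) (n + 2)]
    refine Finset.sum_congr rfl (fun i hi => ?_)
    have := Finset.mem_range.mp hi
    rw [Y_mul_EwC (n + 1) i (by omega)]
  have e7 : ∑ i ∈ Finset.Ico (n + 2) (k + 1), ey (Yg * Ew (n + 1 + 1) i 0)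
      = ∑ i ∈ Finset.Ico (n + 2) (k + 1), ey (Ew (n + 1) i 0) := by
    refine Finset.sum_congr rfl (fun i hi => ?_)
    have hi' := (Finset.mem_Ico.mp hi).1
    obtain ⟨e, rfl⟩ : ∃ e, i = n + 1 + 1 + e := ⟨i - (n + 2), by omega⟩
    rw [Y_mul_EwD (n + 1) (n + 1 + 1 + e) 0 (by omega)]
  have e8 : ∑ j ∈ Finset.range (k + 1), ex (Yg * Ew (n + 1 + 1) (k + 1) j)
      = ∑ j ∈ Finset.range (k + 1), ex (Ew (n + 1) (k + 1) j) :=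
    Finset.sum_congr rfl (fun j _ => by rw [Y_mul_EwD (n + 1) (k + 1) j (by omega)])
  rw [beta_Ew (n + 1) k]
  simp only [smul_sub, smul_add, Finset.smul_sum, smul_ex, smul_ey]
  rw [range_split (fun i => ey (Yg * Ew (n + 1) i 0)) (show n + 1 ≤ k by omega)]
  rw [range_split (fun i => ey (Yg * Ew (n + 1 + 1) i 0)) (show n + 2 ≤ k + 1 by omega)]
  rw [e1, e2, e3, e4, e5, e6, e7, e8]
  rw [beta_Ew n k, beta_Ew n (n + 1)]
  simp only [c2_Ew, Nat.add_sub_cancel, Finset.sum_add_distrib]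
  rw [range_split (fun i => ey (Ew n i 0)) (show n + 1 ≤ k by omega)]
  rw [range_split (fun i => ey (Ew (n + 1) i 0)) (show n + 2 ≤ k + 1 by omega)]
  abel

end FIMaux
namespace FIMaux

lemma mem_c1 {K n k : ℕ} (h1 : 0 < k) (h2 : k ≤ n) : c1 n k ∈ W K :=
  Submodule.subset_span (by left; left; exact ⟨n, k, h1, h2, rfl⟩)

lemma mem_c2 {K n k j : ℕ} (h1 : n < k) (h2 : 0 < j) (h3 : j ≤ k) : c2 n k j ∈ W K :=
  Submodule.subset_span (by left; right; exact ⟨n, k, j, h1, h2, h3, rfl⟩)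

lemma mem_beta {K n k : ℕ} (h1 : n < k) (h2 : k ≤ K) : beta n k ∈ W K :=
  Submodule.subset_span (by right; exact ⟨n, k, h1, h2, rfl⟩)

lemma Xgen {K : ℕ} : ∀ v ∈
    ({v | ∃ n k, 0 < k ∧ k ≤ n ∧ v = c1 n k} ∪
     {v | ∃ n k j, n < k ∧ 0 < j ∧ j ≤ k ∧ v = c2 n k j} ∪
     {v | ∃ n k, n < k ∧ k ≤ K ∧ v = beta n k} : Set (R × R)), Xg • v ∈ W K := by
  rintro v ((⟨n, k, h1, h2, rfl⟩ | ⟨n, k, j, h1, h2, h3, rfl⟩) | ⟨n, k, h1, h2, rfl⟩)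
  · rw [smulX_c1]
    exact mem_c1 h1 (by omega)
  · rcases Nat.lt_or_ge (n + 1) k with hl | he
    · rw [smulX_c2_lt]
      exact mem_c2 hl h2 h3
    · obtain rfl : k = n + 1 := by omega
      rw [smulX_c2_eq n j h2 h3]
      exact mem_c1 (by omega) (by omega)
  · rcases Nat.lt_or_ge (n + 1) k with hl | he
    · rw [smulX_beta]
      exact mem_beta hl h2
    · obtain rfl : k = n + 1 := by omega
      rw [smulX_beta, beta_diag (n + 1)]
      refine sub_mem (Submodule.sum_mem _ fun i hi => ?_) (Submodule.sum_mem _ fun i hi => ?_)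
      · have := Finset.mem_range.mp hi
        exact mem_c1 (by omega) (by omega)
      · have := Finset.mem_range.mp hi
        exact mem_c1 (by omega) (by omega)

lemma Ygen {K : ℕ} : ∀ v ∈
    ({v | ∃ n k, 0 < k ∧ k ≤ n ∧ v = c1 n k} ∪
     {v | ∃ n k j, n < k ∧ 0 < j ∧ j ≤ k ∧ v = c2 n k j} ∪
     {v | ∃ n k, n < k ∧ k ≤ K ∧ v = beta n k} : Set (R × R)), Yg • v ∈ W K := by
  rintro v ((⟨n, k, h1, h2, rfl⟩ | ⟨n, k, j, h1, h2, h3, rfl⟩) | ⟨n, k, h1, h2, rfl⟩)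
  · rw [smulY_c1 n k h1 h2]
    exact mem_c2 (by omega) (by omega) (by omega)
  · match n, h1 with
    | 0, _ =>
      rw [smulY_c2_0]
      exact mem_c2 (by omega) h2 (by omega)
    | (n + 1), h1 =>
      rw [smulY_c2_pos n k j (by omega)]
      exact mem_c2 (by omega) h2 h3
  · match n, h1 with
    | 0, _ =>
      rw [smulY_beta0]
      exact neg_mem (mem_c2 (by omega) (by omega) (by omega))
    | (n + 1), h1 =>
      rw [smulY_beta_pos n k h1]
      refine sub_mem (add_mem (sub_mem (mem_beta (by omega) h2) (mem_beta (by omega) (by omega)))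
        (Submodule.sum_mem _ fun j hj => ?_)) (Submodule.sum_mem _ fun j hj => ?_)
      · have := Finset.mem_range.mp hj
        exact mem_c2 (by omega) (by omega) (by omega)
      · have := Finset.mem_range.mp hj
        exact mem_c2 (by omega) (by omega) (by omega)

lemma smul_W {K : ℕ} {r : R}
    (hgen : ∀ v ∈
      ({v | ∃ n k, 0 < k ∧ k ≤ n ∧ v = c1 n k} ∪
       {v | ∃ n k j, n < k ∧ 0 < j ∧ j ≤ k ∧ v = c2 n k j} ∪
       {v | ∃ n k, n < k ∧ k ≤ K ∧ v = beta n k} : Set (R × R)), r • v ∈ W K) :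
    ∀ w ∈ W K, r • w ∈ W K := by
  intro w hw
  induction hw using Submodule.span_induction with
  | mem v hv => exact hgen v hv
  | zero => rw [smul_zero]; exact zero_mem _
  | add u v _ _ hu hv => rw [smul_add]; exact add_mem hu hv
  | smul a u _ hu => rw [smul_comm]; exact Submodule.smul_mem _ a hu

end FIMaux
/-- Every `W_K` is closed under the diagonal left action of `M` on `R × R`,
i.e. `W_K` is a left `ℤM`-submodule. -/
theorem WK_submodule (K : ℕ) :
    ∀ (m : FIM1) (w : R × R), w ∈ W K →
      (MonoidAlgebra.of ℤ FIM1 m * w.1, MonoidAlgebra.of ℤ FIM1 m * w.2) ∈ W K := by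
  have hX : ∀ w ∈ W K, Xg • w ∈ W K := FIMaux.smul_W FIMaux.Xgen
  have hY : ∀ w ∈ W K, Yg • w ∈ W K := FIMaux.smul_W FIMaux.Ygen
  have key : ∀ (u : FreeMonoid Bool) (w : R × R), w ∈ W K →
      (MonoidAlgebra.of ℤ FIM1 ((conGen FIMRel1).mk' u)) • w ∈ W K := by
    intro u
    induction u using FreeMonoid.recOn with
    | one =>
      intro w hw
      simpa [map_one, one_smul] using hw
    | of_mul b l ihl =>
      intro w hw
      rw [map_mul, map_mul, mul_smul]
      cases b
      · exact hY _ (ihl w hw)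
      · exact hX _ (ihl w hw)
  intro m w hw
  have hm : (MonoidAlgebra.of ℤ FIM1 m) • w ∈ W K := by
    induction m using Con.induction_on with
    | H u => exact key u w hw
  have h2 : (MonoidAlgebra.of ℤ FIM1 m * w.1, MonoidAlgebra.of ℤ FIM1 m * w.2)
      = (MonoidAlgebra.of ℤ FIM1 m) • w := by
    ext
    · simp [Prod.smul_fst, smul_eq_mul]
    · simp [Prod.smul_snd, smul_eq_mul]
  rw [h2]
  exact hm
end

section
/- For every K ≥ 1 and every n with 0 ≤ n < K, the element β(n,K) does not belong to W_{K−1}. Consequently the chain W₀ ⊊ W₁ ⊊ W₂ ⊊ ⋯ is strictly increasing. -/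
/-! ### Auxiliary: the Munn-triple invariant -/

structure Tri where
  lo : ℤ
  hi : ℤ
  en : ℤ
  hlo : lo ≤ 0
  hhi : 0 ≤ hi
  hloen : lo ≤ en
  henhi : en ≤ hi

lemma Tri.ext3 {a b : Tri} (h1 : a.lo = b.lo) (h2 : a.hi = b.hi) (h3 : a.en = b.en) :
    a = b := by cases a; cases b; simp_all

def Tri.mul : Tri → Tri → Tri
  | ⟨m1, M1, e1, h1, h2, h3, h4⟩, ⟨m2, M2, e2, g1, g2, g3, g4⟩ =>
    ⟨min m1 (e1 + m2), max M1 (e1 + M2), e1 + e2, by omega, by omega, by omega, by omega⟩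

instance : Monoid Tri where
  mul := Tri.mul
  one := ⟨0, 0, 0, le_refl _, le_refl _, le_refl _, le_refl _⟩
  mul_assoc a b c := by
    cases a; cases b; cases c
    apply Tri.ext3 <;> simp [Tri.mul, HMul.hMul, Mul.mul] <;> omega
  one_mul a := by
    cases a with
    | mk m M e h1 h2 h3 h4 =>
      apply Tri.ext3 <;> simp [Tri.mul, HMul.hMul, Mul.mul, One.one] <;> omega
  mul_one a := by
    cases a with
    | mk m M e h1 h2 h3 h4 =>
      apply Tri.ext3 <;> simp [Tri.mul, HMul.hMul, Mul.mul, One.one] <;> omega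

@[simp] lemma Tri.mul_lo (a b : Tri) : (a * b).lo = min a.lo (a.en + b.lo) := by
  cases a; cases b; rfl
@[simp] lemma Tri.mul_hi (a b : Tri) : (a * b).hi = max a.hi (a.en + b.hi) := by
  cases a; cases b; rfl
@[simp] lemma Tri.mul_en (a b : Tri) : (a * b).en = a.en + b.en := by
  cases a; cases b; rfl
@[simp] lemma Tri.one_lo : (1 : Tri).lo = 0 := rfl
@[simp] lemma Tri.one_hi : (1 : Tri).hi = 0 := rfl
@[simp] lemma Tri.one_en : (1 : Tri).en = 0 := rfl

def Xt : Tri := ⟨0, 1, 1, le_refl _, by norm_num, by norm_num, le_refl _⟩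
def Yt : Tri := ⟨-1, 0, -1, by norm_num, le_refl _, le_refl _, by norm_num⟩

noncomputable def FF : FreeMonoid Bool →* Tri := FreeMonoid.lift (fun b => if b then Xt else Yt)

def tinv (t : Tri) : Tri :=
  ⟨t.lo - t.en, t.hi - t.en, -t.en,
   by have := t.hloen; omega, by have := t.henhi; omega,
   by have := t.hlo; omega, by have := t.hhi; omega⟩

@[simp] lemma tinv_lo (t : Tri) : (tinv t).lo = t.lo - t.en := rfl
@[simp] lemma tinv_hi (t : Tri) : (tinv t).hi = t.hi - t.en := rfl
@[simp] lemma tinv_en (t : Tri) : (tinv t).en = -t.en := rfl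

lemma tinv_mul (a b : Tri) : tinv (a * b) = tinv b * tinv a := by
  apply Tri.ext3 <;> simp <;> omega

lemma winv_cons (b : Bool) (a : FreeMonoid Bool) :
    winv (FreeMonoid.of b * a) = winv a * FreeMonoid.of (!b) := by
  simp only [winv, FreeMonoid.toList_mul, FreeMonoid.toList_of, List.singleton_append,
    List.reverse_cons, List.map_append, List.map_cons, List.map_nil, FreeMonoid.ofList_append]
  rfl

lemma FF_of_not (b : Bool) : FF (FreeMonoid.of (!b)) = tinv (FF (FreeMonoid.of b)) := by
  cases b <;> (apply Tri.ext3 <;> simp [FF, Xt, Yt])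

lemma FF_winv (w : FreeMonoid Bool) : FF (winv w) = tinv (FF w) := by
  induction w using FreeMonoid.inductionOn' with
  | one =>
    show FF (winv 1) = tinv (FF 1)
    have : winv 1 = 1 := rfl
    rw [this, map_one]
    apply Tri.ext3 <;> simp
  | of_mul b a ih =>
    rw [winv_cons, map_mul, ih, FF_of_not, ← tinv_mul, ← map_mul]

lemma hkerFF : conGen FIMRel1 ≤ Con.ker FF := by
  apply Con.conGen_le.mpr
  rintro a b h
  rw [Con.ker_rel]
  cases h with
  | idem w =>
    simp only [map_mul, FF_winv]
    apply Tri.ext3 <;> simp <;> omega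
  | comm w z =>
    simp only [map_mul, FF_winv]
    apply Tri.ext3 <;> simp <;> omega

noncomputable def psiT : FIM1 →* Tri := Con.lift _ FF hkerFF

lemma psiT_mx : psiT mx = Xt := by
  rw [mx, psiT, Con.lift_mk']; rfl

lemma psiT_my : psiT my = Yt := by
  rw [my, psiT, Con.lift_mk']; rfl

lemma Xt_pow (n : ℕ) : Xt ^ n =
    ⟨0, n, n, le_refl _, Int.ofNat_nonneg n, Int.ofNat_nonneg n, le_refl _⟩ := by
  induction n with
  | zero => rw [pow_zero]; apply Tri.ext3 <;> simp
  | succ n ih => rw [pow_succ, ih]; apply Tri.ext3 <;> simp [Xt] <;> push_cast <;> omega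

lemma Yt_pow (k : ℕ) : Yt ^ k =
    ⟨-k, 0, -k, by omega, le_refl _, le_refl _, by omega⟩ := by
  induction k with
  | zero => rw [pow_zero]; apply Tri.ext3 <;> simp
  | succ k ih => rw [pow_succ, ih]; apply Tri.ext3 <;> simp [Yt] <;> push_cast <;> omega

lemma psi_mono (n k j : ℕ) : psiT (mx ^ n * my ^ k * mx ^ j) =
    ⟨min 0 ((n : ℤ) - k), max (n : ℤ) ((n : ℤ) - k + j), (n : ℤ) - k + j,
     by omega, by omega, by omega, by omega⟩ := by
  rw [map_mul, map_mul, map_pow, map_pow, map_pow, psiT_mx, psiT_my, Xt_pow, Yt_pow, Xt_pow]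
  apply Tri.ext3 <;> simp <;> omega

/-! ### Auxiliary: the separating linear functional -/

def cIdx (K : ℕ) (t : Tri) : ℤ := if t.en = t.hi ∧ (K : ℤ) ≤ t.hi - t.lo then 1 else 0

noncomputable def LCK (K : ℕ) : (FIM1 →₀ ℤ) →ₗ[ℤ] ℤ :=
  Finsupp.linearCombination ℤ (fun m => cIdx K (psiT m))

noncomputable def phiK (K : ℕ) : (R × R) →ₗ[ℤ] ℤ where
  toFun p := LCK K p.1.coeff
  map_add' p q := map_add (LCK K) p.1.coeff q.1.coeff
  map_smul' r p := map_smul (LCK K) r p.1.coeff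

lemma phiK_ex_of (K : ℕ) (m : FIM1) :
    phiK K (ex (MonoidAlgebra.of ℤ FIM1 m)) = cIdx K (psiT m) := by
  show LCK K (MonoidAlgebra.of ℤ FIM1 m).coeff = _
  rw [MonoidAlgebra.of_apply, MonoidAlgebra.coeff_single, LCK, Finsupp.linearCombination_single, one_smul]

lemma phiK_ey (K : ℕ) (r : R) : phiK K (ey r) = 0 := by
  show LCK K (0 : FIM1 →₀ ℤ) = 0
  exact map_zero _

lemma Xg_pow_mul (n k j : ℕ) :
    Xg ^ n * Yg ^ k * Xg ^ j = MonoidAlgebra.of ℤ FIM1 (mx ^ n * my ^ k * mx ^ j) := by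
  rw [map_mul, map_mul, map_pow, map_pow, map_pow]; rfl

lemma phiK_mono (K n k j : ℕ) :
    phiK K (ex (Xg ^ n * Yg ^ k * Xg ^ j)) = cIdx K (psiT (mx ^ n * my ^ k * mx ^ j)) := by
  rw [Xg_pow_mul, phiK_ex_of]

lemma cIdx_lt (K n k j : ℕ) (h : j < k) : cIdx K (psiT (mx ^ n * my ^ k * mx ^ j)) = 0 := by
  rw [psi_mono]
  dsimp only [cIdx]
  rw [if_neg]
  omega

lemma cIdx_corner (K n k : ℕ) (h : n < k) :
    cIdx K (psiT (mx ^ n * my ^ k * mx ^ k)) = if K ≤ k then 1 else 0 := by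
  rw [psi_mono]
  dsimp only [cIdx]
  split_ifs with h1 h2 <;> first | rfl | omega

lemma cIdx_xn (K n : ℕ) : cIdx K (psiT (mx ^ n)) = if K ≤ n then 1 else 0 := by
  rw [show (mx ^ n : FIM1) = mx ^ n * my ^ 0 * mx ^ 0 by simp, psi_mono]
  dsimp only [cIdx]
  split_ifs with h1 h2 <;> first | rfl | omega

lemma phiK_ex_xn (K n : ℕ) : phiK K (ex (Xg ^ n)) = if K ≤ n then 1 else 0 := by
  rw [show (Xg ^ n : R) = Xg ^ n * Yg ^ 0 * Xg ^ 0 by simp, phiK_mono,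
    show (mx ^ n * my ^ 0 * mx ^ 0 : FIM1) = mx ^ n by simp, cIdx_xn]

lemma phiK_c1 (K n k : ℕ) (hk : 0 < k) : phiK K (c1 n k) = 0 := by
  rw [c1, map_add, phiK_ey, zero_add,
    show Xg ^ n * Yg ^ k = Xg ^ n * Yg ^ k * Xg ^ 0 by rw [pow_zero, mul_one], phiK_mono]
  exact cIdx_lt K n k 0 hk

lemma phiK_c2 (K n k j : ℕ) (hj : 0 < j) (hjk : j ≤ k) : phiK K (c2 n k j) = 0 := by
  rw [c2, map_add, phiK_ey, add_zero, phiK_mono]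
  exact cIdx_lt K n k (j - 1) (by omega)

lemma phiK_beta (K n k : ℕ) (h : n < k) :
    phiK K (beta n k) = (if K ≤ k then 1 else 0) - (if K ≤ n then 1 else 0) := by
  rw [beta, map_sub, map_sub, map_sub, map_add, map_add, map_sum, map_sum, map_sum, map_sum]
  rw [Finset.sum_eq_zero (fun i _ => phiK_ey K _),
    Finset.sum_eq_zero (fun j hj => by
      rw [phiK_mono]; exact cIdx_lt K n k j (Finset.mem_range.mp hj)),
    Finset.sum_eq_zero (fun i _ => phiK_ey K _),
    Finset.sum_eq_zero (fun j hj => by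
      rw [phiK_mono]; exact cIdx_lt K (n + 1) (k + 1) j (Finset.mem_range.mp hj)),
    phiK_mono, cIdx_corner K n k h, phiK_ex_xn]
  ring

lemma beta_not_mem (K n : ℕ) (hK : 1 ≤ K) (hn : n < K) : beta n K ∉ W (K - 1) := by
  intro hmem
  have hle : W (K - 1) ≤ LinearMap.ker (phiK K) := by
    rw [W, Submodule.span_le]
    rintro v ((⟨n', k', hk1, hk2, rfl⟩ | ⟨n', k', j', h1, h2, h3, rfl⟩) | ⟨n', k', h1, h2, rfl⟩)
    · simp only [SetLike.mem_coe, LinearMap.mem_ker]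
      exact phiK_c1 K n' k' hk1
    · simp only [SetLike.mem_coe, LinearMap.mem_ker]
      exact phiK_c2 K n' k' j' h2 h3
    · simp only [SetLike.mem_coe, LinearMap.mem_ker]
      rw [phiK_beta K n' k' h1, if_neg (by omega : ¬ K ≤ k'), if_neg (by omega : ¬ K ≤ n'),
        sub_zero]
  have h0 := hle hmem
  rw [LinearMap.mem_ker, phiK_beta K n K hn, if_pos (le_refl K),
    if_neg (by omega : ¬ K ≤ n), sub_zero] at h0
  exact one_ne_zero h0


/-- For `K ≥ 1` and `n < K`, `β(n,K) ∉ W_{K−1}`; consequently the chain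
`W₀ ⊊ W₁ ⊊ W₂ ⊊ ⋯` is strictly increasing. -/
theorem W_chain_strict :
    (∀ K n : ℕ, 1 ≤ K → n < K → beta n K ∉ W (K - 1)) ∧
    (∀ K : ℕ, W K < W (K + 1)) := by
  refine ⟨beta_not_mem, fun K => ?_⟩
  have hle : W K ≤ W (K + 1) := by
    apply Submodule.span_mono
    rintro v ((h | h) | ⟨n, k, h1, h2, rfl⟩)
    · exact Or.inl (Or.inl h)
    · exact Or.inl (Or.inr h)
    · exact Or.inr ⟨n, k, h1, by omega, rfl⟩
  refine lt_of_le_of_ne hle (fun hEq => ?_)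
  have hmem : beta 0 (K + 1) ∈ W (K + 1) :=
    Submodule.subset_span (Or.inr ⟨0, K + 1, by omega, le_refl _, rfl⟩)
  have hnot := beta_not_mem (K + 1) 0 (by omega) (by omega)
  rw [Nat.add_sub_cancel] at hnot
  exact hnot (hEq.ge hmem)
end
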